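/- arXiv:2501.03451 — 3 statements merged into one kernel-verified Lean document; each statement's English description precedes it below -/
import Mathlib

section
/- Rényi differential privacy composes additively: if algorithms A₁, …, A_m each satisfy (α, ε)-RDP on the same dataset, then the composed mechanism (A₁, …, A_m) satisfies (α, m·ε)-RDP. -/
open MeasureTheory ENNReal

section aux

variable {A B : Type*} [MeasurableSpace A] [MeasurableSpace B]

lemma myProdWithDensity (μ : Measure A) (ν : Measure B) [SigmaFinite μ] [SigmaFinite ν]
    {f : A → ℝ≥0∞} {g : B → ℝ≥0∞} (hf : Measurable f) (hg : Measurable g)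
    [SigmaFinite (μ.withDensity f)] [SigmaFinite (ν.withDensity g)] :
    (μ.withDensity f).prod (ν.withDensity g)
      = (μ.prod ν).withDensity (fun z => f z.1 * g z.2) := by
  refine Measure.prod_eq (fun s t hs ht => ?_)
  rw [withDensity_apply _ (hs.prod ht), ← Measure.prod_restrict,
    lintegral_prod_mul hf.aemeasurable hg.aemeasurable,
    withDensity_apply _ hs, withDensity_apply _ ht]

lemma mySingProdLeft {s ν₁ : Measure A} (μ ν₂ : Measure B) [SFinite μ] [SFinite ν₂]
    (h : s ⟂ₘ ν₁) : (s.prod μ) ⟂ₘ (ν₁.prod ν₂) := by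
  obtain ⟨u, hu, hsu, hν⟩ := h
  refine ⟨Prod.fst ⁻¹' u, hu.preimage measurable_fst, ?_, ?_⟩
  · rw [← Set.prod_univ, Measure.prod_prod, hsu, zero_mul]
  · rw [← Set.preimage_compl, ← Set.prod_univ, Measure.prod_prod, hν, zero_mul]

lemma mySingProdRight {s ν₂ : Measure B} (μ ν₁ : Measure A) [SFinite s] [SFinite ν₂]
    (h : s ⟂ₘ ν₂) : (μ.prod s) ⟂ₘ (ν₁.prod ν₂) := by
  obtain ⟨u, hu, hsu, hν⟩ := h
  refine ⟨Prod.snd ⁻¹' u, hu.preimage measurable_snd, ?_, ?_⟩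
  · rw [← Set.univ_prod, Measure.prod_prod, hsu, mul_zero]
  · rw [← Set.preimage_compl, ← Set.univ_prod, Measure.prod_prod, hν, mul_zero]

lemma myRnDerivProd (P₁ Q₁ : Measure A) (P₂ Q₂ : Measure B)
    [IsFiniteMeasure P₁] [IsFiniteMeasure Q₁] [IsFiniteMeasure P₂] [IsFiniteMeasure Q₂] :
    (P₁.prod P₂).rnDeriv (Q₁.prod Q₂)
      =ᵐ[Q₁.prod Q₂] fun z => P₁.rnDeriv Q₁ z.1 * P₂.rnDeriv Q₂ z.2 := by
  set w₁ := Q₁.withDensity (P₁.rnDeriv Q₁) with hw₁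
  set w₂ := Q₂.withDensity (P₂.rnDeriv Q₂) with hw₂
  set s₁ := P₁.singularPart Q₁ with hs₁
  set s₂ := P₂.singularPart Q₂ with hs₂
  have hfin₁ : IsFiniteMeasure w₁ := isFiniteMeasure_of_le P₁ (Measure.withDensity_rnDeriv_le _ _)
  have hfin₂ : IsFiniteMeasure w₂ := isFiniteMeasure_of_le P₂ (Measure.withDensity_rnDeriv_le _ _)
  have hfs₁ : IsFiniteMeasure s₁ := isFiniteMeasure_of_le P₁ (Measure.singularPart_le _ _)
  have hfs₂ : IsFiniteMeasure s₂ := isFiniteMeasure_of_le P₂ (Measure.singularPart_le _ _)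
  have hsing : (s₁.prod s₂ + s₁.prod w₂ + w₁.prod s₂) ⟂ₘ (Q₁.prod Q₂) := by
    refine (Measure.MutuallySingular.add_left ?_ ?_).add_left ?_
    · exact mySingProdLeft _ _ (Measure.mutuallySingular_singularPart _ _)
    · exact mySingProdLeft _ _ (Measure.mutuallySingular_singularPart _ _)
    · exact mySingProdRight _ _ (Measure.mutuallySingular_singularPart _ _)
  have hadd : P₁.prod P₂ = (s₁.prod s₂ + s₁.prod w₂ + w₁.prod s₂)
      + (Q₁.prod Q₂).withDensity (fun z => P₁.rnDeriv Q₁ z.1 * P₂.rnDeriv Q₂ z.2) := by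
    have h1 : P₁ = s₁ + w₁ := P₁.haveLebesgueDecomposition_add Q₁
    have h2 : P₂ = s₂ + w₂ := P₂.haveLebesgueDecomposition_add Q₂
    rw [← myProdWithDensity Q₁ Q₂ (Measure.measurable_rnDeriv _ _) (Measure.measurable_rnDeriv _ _)]
    conv_lhs => rw [h1, h2]
    rw [Measure.prod_add, Measure.add_prod, Measure.add_prod]
    abel
  exact (Measure.eq_rnDeriv (ν := Q₁.prod Q₂)
    (f := fun z => P₁.rnDeriv Q₁ z.1 * P₂.rnDeriv Q₂ z.2)
    (((Measure.measurable_rnDeriv P₁ Q₁).comp measurable_fst).mul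
      ((Measure.measurable_rnDeriv P₂ Q₂).comp measurable_snd)) hsing hadd).symm

end aux

universe u

lemma myRnDerivPi : ∀ {n : ℕ} {Ω : Fin n → Type u} [inst : ∀ i, MeasurableSpace (Ω i)]
    (P Q : ∀ i, Measure (Ω i)) [∀ i, IsProbabilityMeasure (P i)]
    [∀ i, IsProbabilityMeasure (Q i)],
    (Measure.pi P).rnDeriv (Measure.pi Q)
      =ᵐ[Measure.pi Q] fun x => ∏ i, (P i).rnDeriv (Q i) (x i) := by
  intro n
  induction n with
  | zero =>
    intro Ω inst P Q hP hQ
    have hPQ : Measure.pi P = Measure.pi Q := by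
      have : ∀ (μ ν : Measure ((i : Fin 0) → Ω i)), IsProbabilityMeasure μ →
          IsProbabilityMeasure ν → μ = ν := by
        intro μ ν hμ hν
        refine Measure.ext fun s hs => ?_
        rcases Set.eq_empty_or_nonempty s with h | h
        · simp [h]
        · have : s = Set.univ := by
            have : Subsingleton ((i : Fin 0) → Ω i) := ⟨fun a b => funext fun i => i.elim0⟩
            obtain ⟨a, ha⟩ := h
            refine Set.eq_univ_of_forall fun b => ?_
            rwa [Subsingleton.elim b a]
          rw [this, hμ.measure_univ, hν.measure_univ]
      exact this _ _ inferInstance inferInstance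
    rw [hPQ]
    filter_upwards [Measure.rnDeriv_self (Measure.pi Q)] with x hx
    simp [hx]
  | succ n ih =>
    intro Ω inst P Q hP hQ
    set e := MeasurableEquiv.piFinSuccAbove Ω 0 with he
    have hemb := e.measurableEmbedding
    have hmapP : Measure.map e (Measure.pi P)
        = (P 0).prod (Measure.pi fun i => P ((0 : Fin (n+1)).succAbove i)) :=
      (MeasureTheory.measurePreserving_piFinSuccAbove P 0).map_eq
    have hmapQ : Measure.map e (Measure.pi Q)
        = (Q 0).prod (Measure.pi fun i => Q ((0 : Fin (n+1)).succAbove i)) :=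
      (MeasureTheory.measurePreserving_piFinSuccAbove Q 0).map_eq
    have h1 := hemb.rnDeriv_map (Measure.pi P) (Measure.pi Q)
    have h2 := myRnDerivProd (P 0) (Q 0)
      (Measure.pi fun i => P ((0 : Fin (n+1)).succAbove i))
      (Measure.pi fun i => Q ((0 : Fin (n+1)).succAbove i))
    have h3 := ih (fun i => P ((0 : Fin (n+1)).succAbove i))
      (fun i => Q ((0 : Fin (n+1)).succAbove i))
    -- lift h3 to the product measure via snd
    have h3' := (Measure.quasiMeasurePreserving_snd
      (μ := Q 0) (ν := Measure.pi fun i => Q ((0 : Fin (n+1)).succAbove i))).ae h3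
    have h23 : ((P 0).prod (Measure.pi fun i => P ((0 : Fin (n+1)).succAbove i))).rnDeriv
        ((Q 0).prod (Measure.pi fun i => Q ((0 : Fin (n+1)).succAbove i)))
        =ᵐ[(Q 0).prod (Measure.pi fun i => Q ((0 : Fin (n+1)).succAbove i))]
        fun z => (P 0).rnDeriv (Q 0) z.1
          * ∏ i, (P ((0 : Fin (n+1)).succAbove i)).rnDeriv (Q ((0 : Fin (n+1)).succAbove i)) (z.2 i) := by
      filter_upwards [h2, h3'] with z hz hz'
      rw [hz, hz']
    rw [hmapP, hmapQ] at h1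
    have h23' : ∀ᵐ x ∂Measure.pi Q,
        ((P 0).prod (Measure.pi fun i => P ((0 : Fin (n+1)).succAbove i))).rnDeriv
          ((Q 0).prod (Measure.pi fun i => Q ((0 : Fin (n+1)).succAbove i))) (e x)
        = (P 0).rnDeriv (Q 0) (e x).1
          * ∏ i, (P ((0 : Fin (n+1)).succAbove i)).rnDeriv
              (Q ((0 : Fin (n+1)).succAbove i)) ((e x).2 i) := by
      refine (hemb.ae_map_iff (p := fun z =>
        ((P 0).prod (Measure.pi fun i => P ((0 : Fin (n+1)).succAbove i))).rnDeriv
          ((Q 0).prod (Measure.pi fun i => Q ((0 : Fin (n+1)).succAbove i))) z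
        = (P 0).rnDeriv (Q 0) z.1
          * ∏ i, (P ((0 : Fin (n+1)).succAbove i)).rnDeriv
              (Q ((0 : Fin (n+1)).succAbove i)) (z.2 i))).mp ?_
      rw [hmapQ]; exact h23
    filter_upwards [h1, h23'] with x hx hx'
    rw [← hx, hx']
    rw [Fin.prod_univ_succAbove (fun i => (P i).rnDeriv (Q i) (x i)) 0]
    rfl

/-- Rényi divergence of order `α` between measures `P` and `Q`. -/
noncomputable def renyiDiv {Ω : Type*} [MeasurableSpace Ω] (α : ℝ)
    (P Q : Measure Ω) : ℝ :=
  (α - 1)⁻¹ * Real.log (∫ x, ((P.rnDeriv Q) x).toReal ^ α ∂Q)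

/-- Additive composition of RDP: if each of `m` mechanisms `A i` satisfies
`(α, ε)`-RDP on the same dataset, then releasing the joint output of all of them
satisfies `(α, m·ε)`-RDP. -/
theorem stmt8 {D : Type*} (m : ℕ) {Ω : Fin m → Type*}
    [∀ i, MeasurableSpace (Ω i)]
    (A : ∀ i : Fin m, D → Measure (Ω i)) (Neighbor : D → D → Prop)
    [∀ i G, IsProbabilityMeasure (A i G)]
    (α ε : ℝ) (hα : 1 < α) (hε : 0 ≤ ε)
    (hRDP : ∀ i : Fin m, ∀ G G', Neighbor G G' → renyiDiv α (A i G) (A i G') ≤ ε) :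
    ∀ G G', Neighbor G G' →
      renyiDiv α (Measure.pi fun i => A i G) (Measure.pi fun i => A i G') ≤ m * ε := by
  intro G G' hGG'
  have hα1 : (0:ℝ) < α - 1 := by linarith
  set d : ∀ i : Fin m, Ω i → ℝ≥0∞ := fun i => (A i G).rnDeriv (A i G') with hd
  have hae := myRnDerivPi (fun i => A i G) (fun i => A i G')
  -- Step 1: rewrite the integrand a.e.
  have hstep1 : (∫ x, (((Measure.pi fun i => A i G).rnDeriv (Measure.pi fun i => A i G')) x).toReal ^ α
        ∂(Measure.pi fun i => A i G'))
      = ∫ x, ∏ i, ((d i (x i)).toReal ^ α) ∂(Measure.pi fun i => A i G') := by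
    refine integral_congr_ae ?_
    filter_upwards [hae] with x hx
    rw [hx, ENNReal.toReal_prod,
      ← Real.finset_prod_rpow Finset.univ _ (fun i _ => ENNReal.toReal_nonneg) α]
  -- Step 2: Fubini
  letI : ∀ i, MeasureSpace (Ω i) := fun i => ⟨A i G'⟩
  haveI : ∀ i, SigmaFinite (volume : Measure (Ω i)) :=
    fun i => inferInstanceAs (SigmaFinite (A i G'))
  have key : (∫ x, ∏ i, ((d i (x i)).toReal ^ α) ∂(Measure.pi fun i => A i G'))
      = ∏ i, ∫ y, (d i y).toReal ^ α ∂(A i G') :=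
    MeasureTheory.integral_fintype_prod_eq_prod (𝕜 := ℝ)
      (fun i y => (d i y).toReal ^ α)
  set I : Fin m → ℝ := fun i => ∫ y, (d i y).toReal ^ α ∂(A i G') with hI
  have hI0 : ∀ i, 0 ≤ I i :=
    fun i => integral_nonneg fun y => Real.rpow_nonneg ENNReal.toReal_nonneg α
  have hIle : ∀ i, I i ≤ Real.exp ((α - 1) * ε) := by
    intro i
    have h := hRDP i G G' hGG'
    unfold renyiDiv at h
    have hlog : Real.log (I i) ≤ (α - 1) * ε := by
      have := mul_le_mul_of_nonneg_left h (le_of_lt hα1)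
      calc Real.log (I i) = (α - 1) * ((α - 1)⁻¹ * Real.log (I i)) := by
            field_simp
        _ ≤ (α - 1) * ε := this
    rcases (hI0 i).eq_or_lt with h0 | hpos
    · rw [← h0]; positivity
    · calc I i = Real.exp (Real.log (I i)) := (Real.exp_log hpos).symm
        _ ≤ Real.exp ((α - 1) * ε) := Real.exp_le_exp.mpr hlog
  have hprod : ∏ i, I i ≤ Real.exp ((α - 1) * ε) ^ m := by
    calc ∏ i, I i ≤ ∏ _i : Fin m, Real.exp ((α - 1) * ε) :=
          Finset.prod_le_prod (fun i _ => hI0 i) (fun i _ => hIle i)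
      _ = Real.exp ((α - 1) * ε) ^ m := by
          rw [Finset.prod_const, Finset.card_univ, Fintype.card_fin]
  have hprod0 : 0 ≤ ∏ i, I i := Finset.prod_nonneg fun i _ => hI0 i
  have hlogP : Real.log (∏ i, I i) ≤ (α - 1) * (m * ε) := by
    rcases hprod0.eq_or_lt with h0 | hpos
    · rw [← h0, Real.log_zero]; positivity
    · calc Real.log (∏ i, I i) ≤ Real.log (Real.exp ((α - 1) * ε) ^ m) :=
            Real.log_le_log hpos hprod
        _ = (m : ℝ) * ((α - 1) * ε) := by rw [Real.log_pow, Real.log_exp]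
        _ = (α - 1) * (m * ε) := by ring
  unfold renyiDiv
  rw [hstep1, key]
  calc (α - 1)⁻¹ * Real.log (∏ i, I i) ≤ (α - 1)⁻¹ * ((α - 1) * (m * ε)) :=
        mul_le_mul_of_nonneg_left hlogP (by positivity)
    _ = m * ε := by field_simp
end

section
/- Let P be a finite matrix of nonnegative reals indexed by V × V with at least one strictly positive entry, let m = min{p_ij : p_ij > 0}, and let k > 0. Consider the objective 𝓛(X) = Σ_{i,j} [ -p_ij·log σ(x_ij) - k·m·log σ(-x_ij) ] over matrices X = (x_ij) restricted to entries with p_ij > 0. Then 𝓛 is minimized entrywise at x_ij = log(p_ij/(k·m)), and this is the unique critical point in each coordinate. -/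
noncomputable def sigmoid (x : ℝ) : ℝ := (1 + Real.exp (-x))⁻¹

/-- Per-entry skip-gram objective with negative-sampling weight `k·m`. -/
noncomputable def entryLoss (p k m x : ℝ) : ℝ :=
  -p * Real.log (sigmoid x) - k * m * Real.log (sigmoid (-x))

lemma one_add_exp_pos (x : ℝ) : 0 < 1 + Real.exp x := by positivity

lemma sigmoid_strictMono : StrictMono sigmoid := by
  intro a b hab
  unfold sigmoid
  apply inv_strictAnti₀ (one_add_exp_pos _)
  exact add_lt_add_right (Real.exp_lt_exp.2 (by linarith)) 1

lemma entryLoss_eq (p k m : ℝ) :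
    entryLoss p k m = fun x => p * Real.log (1 + Real.exp (-x)) + k * m * Real.log (1 + Real.exp x) := by
  funext x
  unfold entryLoss sigmoid
  rw [Real.log_inv, Real.log_inv, neg_neg]
  ring

lemma entryLoss_hasDerivAt (p k m x : ℝ) :
    HasDerivAt (entryLoss p k m) ((p + k * m) * sigmoid x - p) x := by
  rw [entryLoss_eq]
  have h1 : HasDerivAt (fun y : ℝ => 1 + Real.exp (-y)) (-Real.exp (-x)) x := by
    have := ((Real.hasDerivAt_exp (-x)).comp x (hasDerivAt_neg x)).const_add 1
    simpa using this
  have h2 : HasDerivAt (fun y : ℝ => 1 + Real.exp y) (Real.exp x) x := by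
    simpa using (Real.hasDerivAt_exp x).const_add 1
  have h1' := (h1.log (one_add_exp_pos (-x)).ne').const_mul p
  have h2' := (h2.log (one_add_exp_pos x).ne').const_mul (k * m)
  have h := h1'.add h2'
  convert h using 1
  · rfl
  · rfl
  · rfl
  have hE : (0:ℝ) < Real.exp (-x) := Real.exp_pos _
  have hx : Real.exp x = (Real.exp (-x))⁻¹ := by
    rw [← Real.exp_neg, neg_neg]
  unfold sigmoid
  rw [hx]
  field_simp
  ring

/-- For a finite nonnegative matrix `P` with a positive entry, `m` the minimum
positive entry of `P`, and `k > 0`, the objective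
`𝓛(X) = Σ_{i,j : p_ij > 0} [-p_ij·log σ(x_ij) - k·m·log σ(-x_ij)]` is minimized
entrywise at `x_ij = log(p_ij/(k·m))`, and this is the unique critical point in
each coordinate. -/
theorem stmt11 {V : Type*} [Fintype V] (P : V → V → ℝ) (m k : ℝ)
    (hP : ∀ i j, 0 ≤ P i j)
    (hmin : ∀ i j, 0 < P i j → m ≤ P i j)
    (hmem : ∃ i j, 0 < P i j ∧ P i j = m)
    (hk : 0 < k) :
    ∀ i j, 0 < P i j →
      ((∀ x : ℝ, x ≠ Real.log (P i j / (k * m)) →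
          entryLoss (P i j) k m (Real.log (P i j / (k * m))) < entryLoss (P i j) k m x) ∧
        HasDerivAt (entryLoss (P i j) k m) 0 (Real.log (P i j / (k * m))) ∧
        (∀ x : ℝ, deriv (entryLoss (P i j) k m) x = 0 →
          x = Real.log (P i j / (k * m)))) := by
  obtain ⟨i0, j0, hpos0, heq0⟩ := hmem
  have hm : 0 < m := heq0 ▸ hpos0
  intro i j hp
  set p := P i j with hpdef
  have hc : 0 < k * m := mul_pos hk hm
  set a := Real.log (p / (k * m)) with ha
  set f := entryLoss p k m with hf
  have hpc : 0 < p + k * m := by linarith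
  have hσa : sigmoid a = p / (p + k * m) := by
    unfold sigmoid
    rw [ha, ← Real.log_inv, Real.exp_log (by positivity)]
    field_simp
  have hderiv : ∀ x, HasDerivAt f ((p + k * m) * sigmoid x - p) x :=
    fun x => entryLoss_hasDerivAt p k m x
  have hda : HasDerivAt f 0 a := by
    have := hderiv a
    rw [hσa] at this
    convert this using 1
    field_simp
    ring
  have hcont : ∀ x ∈ (Set.univ : Set ℝ), ContinuousWithinAt f Set.univ x :=
    fun x _ => (hderiv x).differentiableAt.continuousAt.continuousWithinAt
  refine ⟨?_, hda, ?_⟩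
  · intro x hx
    rcases lt_or_gt_of_ne hx with hlt | hgt
    · -- x < a : f strictly anti on Iic a
      have hanti : StrictAntiOn f (Set.Iic a) := by
        apply strictAntiOn_of_deriv_neg (convex_Iic a)
          (fun y _ => (hderiv y).differentiableAt.continuousAt.continuousWithinAt)
        intro y hy
        rw [interior_Iic] at hy
        rw [(hderiv y).deriv]
        have : sigmoid y < sigmoid a := sigmoid_strictMono hy
        rw [hσa] at this
        have : (p + k * m) * sigmoid y < p := by
          calc (p + k * m) * sigmoid y < (p + k * m) * (p / (p + k * m)) := by
                exact (mul_lt_mul_iff_right₀ hpc).2 this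
            _ = p := by field_simp
        linarith
      exact hanti (le_of_lt hlt) (le_refl a) hlt
    · -- a < x : f strictly mono on Ici a
      have hmono : StrictMonoOn f (Set.Ici a) := by
        apply strictMonoOn_of_deriv_pos (convex_Ici a)
          (fun y _ => (hderiv y).differentiableAt.continuousAt.continuousWithinAt)
        intro y hy
        rw [interior_Ici] at hy
        rw [(hderiv y).deriv]
        have : sigmoid a < sigmoid y := sigmoid_strictMono hy
        rw [hσa] at this
        have : p < (p + k * m) * sigmoid y := by
          calc p = (p + k * m) * (p / (p + k * m)) := by field_simp
            _ < (p + k * m) * sigmoid y := (mul_lt_mul_iff_right₀ hpc).2 this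
        linarith
      exact hmono (le_refl a) (le_of_lt hgt) hgt
  · intro x hx
    rw [(hderiv x).deriv] at hx
    have hσ : sigmoid x = sigmoid a := by
      rw [hσa]
      have : (p + k * m) * sigmoid x = p := by linarith
      field_simp
      linarith
    exact sigmoid_strictMono.injective hσ
end

section
/- With the degree-proportional negative sampling distribution ℙ_n(v) ∝ d_v, the skip-gram objective Σ_{i,j} [ -p_ij·log σ(x_ij) - (Σ_j p_ij)·k·(d_j/𝒟)·log σ(-x_ij) ] is minimized entrywise at x_ij = log(p_ij·𝒟/(d_i·d_j)) − log k, where d_i = Σ_j p_ij and 𝒟 = Σ_{i,j} p_ij, assuming all relevant quantities are strictly positive. -/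
lemma log_sigmoid (x : ℝ) : Real.log (sigmoid x) = -Real.log (1 + Real.exp (-x)) := by
  rw [sigmoid, Real.log_inv]

lemma key_deriv (a b x : ℝ) :
    HasDerivAt (fun x => -a * Real.log (sigmoid x) - b * Real.log (sigmoid (-x)))
      ((b * Real.exp x - a) / (Real.exp x + 1)) x := by
  have hfe : (fun x => -a * Real.log (sigmoid x) - b * Real.log (sigmoid (-x)))
      = fun x => a * Real.log (1 + Real.exp (-x)) + b * Real.log (1 + Real.exp x) := by
    funext y
    rw [log_sigmoid, log_sigmoid, neg_neg]
    ring
  rw [hfe]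
  have hpos : (0:ℝ) < 1 + Real.exp (-x) := by positivity
  have hpos2 : (0:ℝ) < 1 + Real.exp x := by positivity
  have h1 : HasDerivAt (fun y : ℝ => 1 + Real.exp (-y)) (-Real.exp (-x)) x := by
    have := (Real.hasDerivAt_exp (-x)).comp x ((hasDerivAt_id x).neg)
    simpa using this.const_add 1
  have h2 : HasDerivAt (fun y : ℝ => 1 + Real.exp y) (Real.exp x) x := by
    simpa using (Real.hasDerivAt_exp x).const_add 1
  have h3 := ((h1.log hpos.ne').const_mul a).add ((h2.log hpos2.ne').const_mul b)
  refine h3.congr_deriv ?_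
  have hne : Real.exp x ≠ 0 := (Real.exp_pos x).ne'
  rw [Real.exp_neg]
  field_simp
  ring

lemma key (a b : ℝ) (ha : 0 < a) (hb : 0 < b) :
    (∀ x : ℝ, x ≠ Real.log (a / b) →
      (fun x => -a * Real.log (sigmoid x) - b * Real.log (sigmoid (-x))) (Real.log (a / b)) <
      (fun x => -a * Real.log (sigmoid x) - b * Real.log (sigmoid (-x))) x) ∧
    HasDerivAt (fun x => -a * Real.log (sigmoid x) - b * Real.log (sigmoid (-x))) 0 (Real.log (a / b)) ∧
    (∀ x : ℝ, deriv (fun x => -a * Real.log (sigmoid x) - b * Real.log (sigmoid (-x))) x = 0 →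
      x = Real.log (a / b)) := by
  set f : ℝ → ℝ := fun x => -a * Real.log (sigmoid x) - b * Real.log (sigmoid (-x)) with hf
  set x₀ := Real.log (a / b) with hx0
  have hab : (0:ℝ) < a / b := div_pos ha hb
  have hex0 : Real.exp x₀ = a / b := Real.exp_log hab
  have hderiv : ∀ x, deriv f x = (b * Real.exp x - a) / (Real.exp x + 1) :=
    fun x => (key_deriv a b x).deriv
  have hd0 : HasDerivAt f 0 x₀ := by
    have := key_deriv a b x₀
    rw [hex0] at this
    convert this using 1
    field_simp
    ring
  have hcont : Continuous f := by
    have : Differentiable ℝ f := fun x => (key_deriv a b x).differentiableAt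
    exact this.continuous
  have hsign : ∀ x, x₀ < x → 0 < deriv f x := by
    intro x hx
    rw [hderiv]
    apply div_pos _ (by positivity)
    have h2 : a / b < Real.exp x := hex0 ▸ Real.exp_lt_exp.mpr hx
    rw [div_lt_iff₀ hb] at h2
    linarith
  have hsign' : ∀ x, x < x₀ → deriv f x < 0 := by
    intro x hx
    rw [hderiv]
    apply div_neg_of_neg_of_pos _ (by positivity)
    have h2 : Real.exp x < a / b := hex0 ▸ Real.exp_lt_exp.mpr hx
    rw [lt_div_iff₀ hb] at h2
    linarith
  have hmono : StrictMonoOn f (Set.Ici x₀) := by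
    apply strictMonoOn_of_deriv_pos (convex_Ici x₀) hcont.continuousOn
    intro x hx
    rw [interior_Ici] at hx
    exact hsign x hx
  have hanti : StrictAntiOn f (Set.Iic x₀) := by
    apply strictAntiOn_of_deriv_neg (convex_Iic x₀) hcont.continuousOn
    intro x hx
    rw [interior_Iic] at hx
    exact hsign' x hx
  refine ⟨?_, hd0, ?_⟩
  · intro x hx
    rcases lt_or_gt_of_ne hx with h | h
    · exact hanti (Set.mem_Iic.mpr h.le) (Set.mem_Iic.mpr le_rfl) h
    · exact hmono (Set.mem_Ici.mpr le_rfl) (Set.mem_Ici.mpr h.le) h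
  · intro x hx
    rw [hderiv] at hx
    have hden : Real.exp x + 1 ≠ 0 := by positivity
    have hb' : b * Real.exp x - a = 0 := (div_eq_zero_iff.mp hx).resolve_right hden
    have : Real.exp x = a / b := by
      field_simp
      linarith
    rw [← Real.log_exp x, this]

/-- With degree-proportional negative sampling, the per-entry skip-gram objective
`-p_ij·log σ(x_ij) - d_i·k·(d_j/𝒟)·log σ(-x_ij)` (where `d_i = Σ_j p_ij` and
`𝒟 = Σ_{i,j} p_ij`) is minimized entrywise at
`x_ij = log(p_ij·𝒟/(d_i·d_j)) − log k`, assuming all quantities are positive. -/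
theorem stmt12 {V : Type*} [Fintype V] (P : V → V → ℝ) (k : ℝ)
    (hP : ∀ i j, 0 < P i j) (hsymm : ∀ i j, P i j = P j i) (hk : 0 < k) :
    ∀ i j,
      let d : V → ℝ := fun v => ∑ w : V, P v w
      let 𝒟 : ℝ := ∑ v : V, ∑ w : V, P v w
      let f : ℝ → ℝ := fun x =>
        -P i j * Real.log (sigmoid x) -
          d i * k * (d j / 𝒟) * Real.log (sigmoid (-x))
      let x₀ : ℝ := Real.log (P i j * 𝒟 / (d i * d j)) - Real.log k
      (∀ x : ℝ, x ≠ x₀ → f x₀ < f x) ∧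
        HasDerivAt f 0 x₀ ∧ (∀ x : ℝ, deriv f x = 0 → x = x₀) := by
  intro i j d 𝒟 f x₀
  have : Nonempty V := ⟨i⟩
  have hd : ∀ v, 0 < d v := fun v => Finset.sum_pos (fun w _ => hP v w) Finset.univ_nonempty
  have hD : 0 < 𝒟 := Finset.sum_pos (fun v _ => hd v) Finset.univ_nonempty
  have hb' : 0 < d i * k * (d j / 𝒟) :=
    mul_pos (mul_pos (hd i) hk) (div_pos (hd j) hD)
  have hx0 : x₀ = Real.log (P i j / (d i * k * (d j / 𝒟))) := by
    show Real.log (P i j * 𝒟 / (d i * d j)) - Real.log k = _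
    rw [Real.log_div (hP i j).ne' hb'.ne',
      Real.log_div (mul_pos (hP i j) hD).ne' (mul_pos (hd i) (hd j)).ne',
      Real.log_mul (hP i j).ne' hD.ne',
      Real.log_mul (hd i).ne' (hd j).ne',
      Real.log_mul (mul_pos (hd i) hk).ne' (div_pos (hd j) hD).ne',
      Real.log_mul (hd i).ne' hk.ne',
      Real.log_div (hd j).ne' hD.ne']
    ring
  rw [hx0]
  exact key (P i j) (d i * k * (d j / 𝒟)) (hP i j) hb'
end
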